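/- A word u over a three-letter alphabet {a,b,c} is cyclically solvable by a weighted marked graph if and only if it is cyclically solvable by a choice-free net. -/

import Mathlib

/-- A labelled transition system with initial state. -/
structure LTS (S L : Type) where
  tr : S → L → S → Prop
  init : S

namespace LTS

/-- Reachability between states of an LTS (directed paths of arcs). -/
def reach {S L : Type} (A : LTS S L) : S → S → Prop :=
  Relation.ReflTransGen (fun s s' => ∃ t, A.tr s t s')

/-- An LTS is reversible if every state is reachable from the initial state
and the initial state is reachable from every state. -/
def reversible {S L : Type} (A : LTS S L) : Prop :=
  ∀ s : S, A.reach A.init s ∧ A.reach s A.init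

end LTS

/-- Isomorphism of labelled transition systems. -/
def ltsIso {S1 S2 L : Type} (A : LTS S1 L) (B : LTS S2 L) : Prop :=
  ∃ ζ : S1 ≃ S2, ζ A.init = B.init ∧ ∀ s t s', A.tr s t s' ↔ B.tr (ζ s) t (ζ s')

/-- A weighted Petri net with places `P` and transitions `T`:
`pre p t` is the weight of the arc from `p` to `t`, `post t p` of the arc from `t` to `p`. -/
structure PetriNet (P T : Type) where
  pre : P → T → ℕ
  post : T → P → ℕ

namespace PetriNet

variable {P T : Type}

/-- A transition `t` is enabled at marking `M`. -/
def enabled (N : PetriNet P T) (M : P → ℕ) (t : T) : Prop :=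
  ∀ p, N.pre p t ≤ M p

/-- A place `p` is enabled by a marking `M`. -/
def placeEnabled (N : PetriNet P T) (M : P → ℕ) (p : P) : Prop :=
  ∀ t, N.pre p t ≤ M p

/-- The marking obtained by firing `t` at `M`. -/
def fire (N : PetriNet P T) (M : P → ℕ) (t : T) : P → ℕ :=
  fun p => M p - N.pre p t + N.post t p

/-- `M [t⟩ M'`. -/
def step (N : PetriNet P T) (M : P → ℕ) (t : T) (M' : P → ℕ) : Prop :=
  N.enabled M t ∧ M' = N.fire M t

/-- A marking `M'` is reachable from `M` by a finite sequence of firings. -/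
def Reach (N : PetriNet P T) (M M' : P → ℕ) : Prop :=
  Relation.ReflTransGen (fun M1 M2 => ∃ t, N.step M1 t M2) M M'

/-- A sequence of transitions is firable from a marking. -/
def firable (N : PetriNet P T) : (P → ℕ) → List T → Prop
  | _, [] => True
  | M, t :: σ => N.enabled M t ∧ N.firable (N.fire M t) σ

/-- The marking reached after firing a sequence of transitions. -/
def fireSeq (N : PetriNet P T) : (P → ℕ) → List T → (P → ℕ)
  | M, [] => M
  | M, t :: σ => N.fireSeq (N.fire M t) σ

/-- A net is choice-free if every place has at most one output transition. -/
def choiceFree (N : PetriNet P T) : Prop :=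
  ∀ p t t', 0 < N.pre p t → 0 < N.pre p t' → t = t'

/-- A weighted marked graph: each place has at most one output and at most one input transition. -/
def wmg (N : PetriNet P T) : Prop :=
  N.choiceFree ∧ ∀ p t t', 0 < N.post t p → 0 < N.post t' p → t = t'

/-- A net is pure if no place is a side condition of some transition. -/
def isPure (N : PetriNet P T) : Prop :=
  ∀ p t, ¬(0 < N.pre p t ∧ 0 < N.post t p)

/-- Liveness: from every reachable marking, every transition can eventually fire again. -/
def live (N : PetriNet P T) (M0 : P → ℕ) : Prop :=
  ∀ (t : T) (M : P → ℕ), N.Reach M0 M → ∃ M', N.Reach M M' ∧ N.enabled M' t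

/-- The reachability graph of a system, as an LTS on the reachable markings. -/
def RG (N : PetriNet P T) (M0 : P → ℕ) : LTS {M : P → ℕ // N.Reach M0 M} T where
  tr := fun M t M' => N.step M.1 t M'.1
  init := ⟨M0, Relation.ReflTransGen.refl⟩

end PetriNet

/-- A system solves an LTS if its reachability graph is isomorphic to it. -/
def Solves {Pl T S : Type} (N : PetriNet Pl T) (M0 : Pl → ℕ) (A : LTS S T) : Prop :=
  ltsIso (N.RG M0) A

/-- CF-solvability of an LTS. -/
def CFSolvable {S L : Type} (A : LTS S L) : Prop :=
  ∃ (k : ℕ) (N : PetriNet (Fin k) L) (M0 : Fin k → ℕ), N.choiceFree ∧ Solves N M0 A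

/-- WMG-solvability of an LTS. -/
def WMGSolvable {S L : Type} (A : LTS S L) : Prop :=
  ∃ (k : ℕ) (N : PetriNet (Fin k) L) (M0 : Fin k → ℕ), N.wmg ∧ Solves N M0 A

/-- Solvability of an LTS by a pure choice-free system. -/
def PureCFSolvable {S L : Type} (A : LTS S L) : Prop :=
  ∃ (k : ℕ) (N : PetriNet (Fin k) L) (M0 : Fin k → ℕ),
    N.choiceFree ∧ N.isPure ∧ Solves N M0 A

/-- The circular LTS induced by a (nonempty) word `w`. -/
def circLTS {L : Type} (w : List L) (hw : 0 < w.length) : LTS (Fin w.length) L where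
  tr := fun s t s' => t = w.get s ∧ s'.val = (s.val + 1) % w.length
  init := ⟨0, hw⟩

/-- The Parikh vector of a word. -/
def parikh {L : Type} [DecidableEq L] (w : List L) (t : L) : ℕ := w.count t

/-- A vector of naturals is prime if the gcd of its components equals 1. -/
def primeVec {L : Type} [Fintype L] (Υ : L → ℕ) : Prop := Finset.univ.gcd Υ = 1

/-- A word is cyclically solvable by a WMG. -/
def cyclicWMGSolvable {L : Type} (w : List L) : Prop :=
  ∃ (hw : 0 < w.length) (k : ℕ) (N : PetriNet (Fin k) L) (M0 : Fin k → ℕ),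
    N.wmg ∧ Solves N M0 (circLTS w hw)

/-- A word is cyclically solvable by a CF net. -/
def cyclicCFSolvable {L : Type} (w : List L) : Prop :=
  ∃ (hw : 0 < w.length) (k : ℕ) (N : PetriNet (Fin k) L) (M0 : Fin k → ℕ),
    N.choiceFree ∧ Solves N M0 (circLTS w hw)

/-- A circuit net: places `p_0 … p_{k-1}` and transitions `τ 0 … τ (k-1)` arranged in a
single alternating cycle, `τ i` being the unique output of `p_i` and the unique input
of `p_{i+1 mod k}`. -/
def isCircuit {k : ℕ} {L : Type} (hk : 0 < k) (N : PetriNet (Fin k) L) : Prop :=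
  ∃ τ : Fin k ≃ L,
    (∀ (i : Fin k) (t : L), 0 < N.pre i t ↔ t = τ i) ∧
    (∀ (i : Fin k) (t : L), 0 < N.post t i ↔ t = τ ⟨(i.val + k - 1) % k, Nat.mod_lt _ hk⟩)

/-- A word is cyclically solvable by a circuit system. -/
def cyclicCircuitSolvable {L : Type} (v : List L) : Prop :=
  ∃ (hv : 0 < v.length) (k : ℕ) (hk : 0 < k) (N : PetriNet (Fin k) L) (M0 : Fin k → ℕ),
    isCircuit hk N ∧ Solves N M0 (circLTS v hv)

/-- The ordered pair `a b` is circularly adjacent in `w`. -/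
def cAdj {L : Type} (w : List L) (a b : L) : Prop :=
  a ≠ b ∧ ((∃ w1 w2, w = w1 ++ a :: b :: w2) ∨ ∃ w3, w = b :: w3 ++ [a])

/-- The projection of a word on a two-element sub-alphabet, as a word over that sub-alphabet. -/
def projPair {L : Type} [DecidableEq L] (w : List L) (a b : L) :
    List {x : L // x = a ∨ x = b} :=
  w.filterMap (fun x => if h : x = a ∨ x = b then some ⟨x, h⟩ else none)

/-- The Parikh vector `P_jq` of the segment of `w` read circularly from state `s_j`
to state `s_q` (empty when `j = q`). -/
def segParikh {L : Type} [DecidableEq L] (w : List L) (hw : 0 < w.length)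
    (j q : Fin w.length) (t : L) : ℕ :=
  ((List.range ((q.val + w.length - j.val) % w.length)).map
    (fun i => w.get ⟨(j.val + i) % w.length, Nat.mod_lt _ hw⟩)).count t

/-- A region of an LTS. -/
def isRegion {S L : Type} (A : LTS S L) (R : S → ℕ) (B F : L → ℕ) : Prop :=
  ∀ s t s', A.tr s t s' → B t ≤ R s ∧ R s' = R s - B t + F t

/-- `gcd_p`: the gcd of all (nonzero) input and output weights of a place. -/
def gcdPlace {Pl T : Type} [Fintype T] (N : PetriNet Pl T) (p : Pl) : ℕ :=
  Finset.univ.gcd (fun t => Nat.gcd (N.pre p t) (N.post t p))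

/-- Conservativeness of a net. -/
def conservative {Pl T : Type} [Fintype Pl] (N : PetriNet Pl T) : Prop :=
  ∃ X : Pl → ℕ, (∀ p, 1 ≤ X p) ∧
    ∀ t, ∑ p, (X p : ℤ) * ((N.post t p : ℤ) - (N.pre p t : ℤ)) = 0

/-- The P-subnet induced by a family of places. -/
def restrictNet {Pl T : Type} {k : ℕ} (N : PetriNet Pl T) (π : Fin k → Pl) :
    PetriNet (Fin k) T where
  pre := fun i t => N.pre (π i) t
  post := fun t i => N.post t (π i)


/-!
In a choice-free solution of the circular LTS of `w`, the cycle forces every incidence row to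
annihilate the Parikh vector of `w`, so each marking is, up to the factor `|w|_t₀`, an integer
combination of the balances `|w|_{t'}·#_t − |w|_t·#_{t'}` of the prefix read so far. Hence the
balances separate states, and since a place has a single output `a`, whenever `a` is enabled at
one state and not at another some balance towards `a` is larger at the first.

The weighted marked graph with a place for each ordered pair of letters, marked by the balance
minus its minimum over a period, realises all balances; it disables the letters other than the
current one as soon as the separation holds with margin `|w|_t`. Over three letters the
separations for two letters `a ≠ b` in both directions must both come from the third letter `c`,
and the cocycle identity `|w|_c β(a,b) + |w|_a β(b,c) + |w|_b β(c,a) = 0` then yields the margin.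
-/

namespace PetriNet

variable {P T : Type}

def incidence (N : PetriNet P T) (p : P) (t : T) : ℤ := N.post t p - N.pre p t

lemma step.marking_eq {N : PetriNet P T} {M M' : P → ℕ} {t : T} (h : N.step M t M') (p : P) :
    (M' p : ℤ) = M p + N.incidence p t := by
  obtain ⟨hen, rfl⟩ := h
  have := hen p
  simp only [fire, incidence]
  omega

end PetriNet

lemma wmg_restrictNet {P T : Type} {k : ℕ} {N : PetriNet P T} (hN : N.wmg) (π : Fin k → P) :
    (restrictNet N π).wmg :=
  ⟨fun i => hN.1 (π i), fun i => hN.2 (π i)⟩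

section CyclicWord

variable {L : Type} (w : List L) (hw : 0 < w.length)

def cycLetter (q : ℕ) : L := w.get ⟨q % w.length, Nat.mod_lt _ hw⟩

variable {w hw}

lemma cycLetter_add_length (q : ℕ) : cycLetter w hw (q + w.length) = cycLetter w hw q := by
  simp [cycLetter]

lemma cycLetter_val (i : Fin w.length) : cycLetter w hw i = w.get i := by
  simp [cycLetter, Nat.mod_eq_of_lt i.isLt]

lemma cycLetter_mem (q : ℕ) : cycLetter w hw q ∈ w := List.get_mem _ _

end CyclicWord

section Balance

variable {L : Type} [DecidableEq L] (w : List L) (hw : 0 < w.length)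

def cycCount (t : L) (q : ℕ) : ℕ := ((List.range q).map (cycLetter w hw)).count t

-- The marking change after `q` steps of a place from `t` to `t'` with weights `|w|_{t'}` (in)
-- and `|w|_t` (out); these weights make it `|w|`-periodic.
def balance (t t' : L) (q : ℕ) : ℤ :=
  w.count t' * cycCount w hw t q - w.count t * cycCount w hw t' q

variable {w hw}

lemma count_cycLetter_pos (q : ℕ) : 0 < w.count (cycLetter w hw q) :=
  List.count_pos_iff.mpr (cycLetter_mem q)

lemma cycCount_succ (t : L) (q : ℕ) :
    cycCount w hw t (q + 1) = cycCount w hw t q + if cycLetter w hw q = t then 1 else 0 := by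
  simp [cycCount, List.range_succ, List.count_singleton]

lemma cycCount_length (t : L) : cycCount w hw t w.length = w.count t := by
  suffices (List.range w.length).map (cycLetter w hw) = w by rw [cycCount, this]
  refine List.ext_getElem (by simp) fun i h _ => ?_
  simpa using cycLetter_val (hw := hw) ⟨i, by simpa using h⟩

lemma cycCount_add_length (t : L) (q : ℕ) :
    cycCount w hw t (q + w.length) = cycCount w hw t q + w.count t := by
  induction q with
  | zero => rw [Nat.zero_add, cycCount_length]; simp [cycCount]
  | succ q ih =>
    rw [Nat.add_right_comm, cycCount_succ, ih, cycLetter_add_length, cycCount_succ]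
    ring

lemma cycCount_eq_zero {t : L} (ht : w.count t = 0) (q : ℕ) : cycCount w hw t q = 0 := by
  induction q with
  | zero => rfl
  | succ q ih =>
    have : cycLetter w hw q ≠ t := fun h => (count_cycLetter_pos (hw := hw) q).ne' (h ▸ ht)
    simp [cycCount_succ, ih, this]

lemma balance_self (t : L) (q : ℕ) : balance w hw t t q = 0 := by
  simp [balance]

lemma balance_swap (t t' : L) (q : ℕ) : balance w hw t' t q = -balance w hw t t' q := by
  simp only [balance]; ring

lemma balance_of_count_eq_zero {t' : L} (t : L) (ht' : w.count t' = 0) (q : ℕ) :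
    balance w hw t t' q = 0 := by
  simp [balance, ht', cycCount_eq_zero ht']

lemma balance_succ (t t' : L) (q : ℕ) :
    balance w hw t t' (q + 1) = balance w hw t t' q
      + (if cycLetter w hw q = t then (w.count t' : ℤ) else 0)
      - (if cycLetter w hw q = t' then (w.count t : ℤ) else 0) := by
  simp only [balance, cycCount_succ]
  split_ifs <;> push_cast <;> ring

lemma balance_add_length (t t' : L) (q : ℕ) :
    balance w hw t t' (q + w.length) = balance w hw t t' q := by
  simp only [balance, cycCount_add_length]; push_cast; ring

lemma balance_mod_length (t t' : L) (q : ℕ) :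
    balance w hw t t' (q % w.length) = balance w hw t t' q := by
  conv_rhs => rw [← Nat.mod_add_div q w.length]
  induction q / w.length with
  | zero => simp
  | succ k ih => rw [Nat.mul_succ, ← Nat.add_assoc, balance_add_length, ih]

lemma balance_cocycle (a b c : L) (q : ℕ) :
    w.count c * balance w hw a b q + w.count a * balance w hw b c q
      + w.count b * balance w hw c a q = 0 := by
  simp only [balance]; ring

lemma balance_mono {t t' : L} {a b : ℕ} (hab : a ≤ b)
    (hfree : ∀ i, a ≤ i → i < b → cycLetter w hw i ≠ t') :
    balance w hw t t' a ≤ balance w hw t t' b := by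
  induction b, hab using Nat.le_induction with
  | base => rfl
  | succ b hab ih =>
    rw [balance_succ, if_neg (hfree b hab (by omega))]
    have := ih fun i h1 h2 => hfree i h1 (by omega)
    split_ifs <;> omega

lemma exists_cycLetter_eq_balance_le {t t' : L} (htt : t' ≠ t) (ht' : 0 < w.count t') (q : ℕ) :
    ∃ i, cycLetter w hw i = t' ∧ balance w hw t t' i ≤ balance w hw t t' q + w.count t := by
  obtain ⟨k, hk⟩ := List.mem_iff_get.mp (List.count_pos_iff.mp ht')
  -- the last occurrence of `t'` before position `q + |w|`
  let i := Nat.findGreatest (fun i => cycLetter w hw i = t') (q + w.length - 1)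
  have hi : cycLetter w hw i = t' :=
    Nat.findGreatest_spec (P := fun i => cycLetter w hw i = t') (m := k) (by omega)
      ((cycLetter_val k).trans hk)
  have hin : i < q + w.length := by
    have : i ≤ q + w.length - 1 := Nat.findGreatest_le _
    omega
  have hmono : balance w hw t t' (i + 1) ≤ balance w hw t t' (q + w.length) :=
    balance_mono hin fun j hj hjq => Nat.findGreatest_is_greatest hj (by omega)
  rw [balance_add_length, balance_succ, if_neg (hi ▸ htt), if_pos hi] at hmono
  exact ⟨i, hi, by linarith⟩

end Balance

section Sums

variable {L : Type} [Fintype L] [DecidableEq L] {w : List L} {hw : 0 < w.length}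

lemma sum_mul_cycCount_succ (x : L → ℤ) (q : ℕ) :
    ∑ t, x t * cycCount w hw t (q + 1)
      = ∑ t, x t * cycCount w hw t q + x (cycLetter w hw q) := by
  simp only [cycCount_succ, Nat.cast_add, mul_add, Finset.sum_add_distrib]
  simp

lemma count_mul_sum_cycCount {x : L → ℤ} (hx : ∑ t, x t * w.count t = 0) (t₀ : L)
    (q : ℕ) :
    w.count t₀ * ∑ t, x t * cycCount w hw t q = ∑ t, x t * balance w hw t t₀ q := by
  have : ∑ t, x t * balance w hw t t₀ q
      = w.count t₀ * ∑ t, x t * cycCount w hw t q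
        - cycCount w hw t₀ q * ∑ t, x t * w.count t := by
    simp only [balance, Finset.mul_sum, ← Finset.sum_sub_distrib]
    exact Finset.sum_congr rfl fun t _ => by ring
  rw [this, hx]; ring

end Sums

section CyclicRun

variable {P L : Type}

structure IsCyclicRun (N : PetriNet P L) (w : List L) (hw : 0 < w.length) (M : ℕ → P → ℕ) :
    Prop where
  step : ∀ q, N.step (M q) (cycLetter w hw q) (M (q + 1))
  eq_cycLetter_of_enabled : ∀ q t, N.enabled (M q) t → t = cycLetter w hw q
  mod_length : ∀ q, M (q % w.length) = M q
  injOn : ∀ i j, i < w.length → j < w.length → M i = M j → i = j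

variable {N : PetriNet P L} {w : List L} {hw : 0 < w.length} {M : ℕ → P → ℕ}

namespace IsCyclicRun

lemma step_iff (hM : IsCyclicRun N w hw M) {q : ℕ} {t : L} {M' : P → ℕ} :
    N.step (M q) t M' ↔ t = cycLetter w hw q ∧ M' = M (q + 1) := by
  refine ⟨fun h => ?_, fun ⟨ht, hM'⟩ => ht ▸ hM' ▸ hM.step q⟩
  obtain rfl := hM.eq_cycLetter_of_enabled q t h.1
  exact ⟨rfl, h.2.trans (hM.step q).2.symm⟩

lemma reach (hM : IsCyclicRun N w hw M) (q : ℕ) : N.Reach (M 0) (M q) := by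
  induction q with
  | zero => exact .refl
  | succ q ih => exact ih.tail ⟨_, hM.step q⟩

lemma exists_eq_of_reach (hM : IsCyclicRun N w hw M) {M' : P → ℕ} (h : N.Reach (M 0) M') :
    ∃ q, M' = M q := by
  induction h with
  | refl => exact ⟨0, rfl⟩
  | tail _ hstep ih =>
    obtain ⟨q, rfl⟩ := ih
    obtain ⟨t, ht⟩ := hstep
    exact ⟨q + 1, (hM.step_iff.mp ht).2⟩

lemma restrictNet {k : ℕ} (hM : IsCyclicRun N w hw M) {π : Fin k → P}
    (hπ : Function.Surjective π) : IsCyclicRun (restrictNet N π) w hw (fun q => M q ∘ π) where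
  step q := ⟨fun i => (hM.step q).1 (π i), by rw [(hM.step q).2]; rfl⟩
  eq_cycLetter_of_enabled q t h :=
    hM.eq_cycLetter_of_enabled q t fun p => by obtain ⟨i, rfl⟩ := hπ p; exact h i
  mod_length q := by simp only [hM.mod_length]
  injOn i j hi hj h := hM.injOn i j hi hj (hπ.injective_comp_right h)

end IsCyclicRun

lemma solves_circLTS_of_isCyclicRun (hM : IsCyclicRun N w hw M) :
    Solves N (M 0) (circLTS w hw) := by
  let F : Fin w.length → {M' // N.Reach (M 0) M'} := fun q => ⟨M q, hM.reach q⟩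
  have hF : Function.Bijective F := by
    refine ⟨fun i j h => Fin.ext (hM.injOn i j i.isLt j.isLt (congrArg Subtype.val h)), ?_⟩
    rintro ⟨M', hM'⟩
    obtain ⟨q, rfl⟩ := hM.exists_eq_of_reach hM'
    exact ⟨⟨q % w.length, Nat.mod_lt _ hw⟩, Subtype.ext (hM.mod_length q)⟩
  refine ⟨(Equiv.ofBijective F hF).symm, ?_, ?_⟩
  · exact (Equiv.ofBijective F hF).symm_apply_eq.mpr (Subtype.ext rfl)
  · intro s t s'
    obtain ⟨i, rfl⟩ := hF.2 s
    obtain ⟨j, rfl⟩ := hF.2 s'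
    simp only [Equiv.ofBijective_symm_apply_apply]
    change N.step (M i) t (M j) ↔ t = w.get i ∧ (j : ℕ) = (i + 1) % w.length
    rw [hM.step_iff, ← cycLetter_val (hw := hw), ← hM.mod_length (i + 1)]
    exact and_congr_right fun _ =>
      ⟨fun h => hM.injOn _ _ j.isLt (Nat.mod_lt _ hw) h, fun h => by rw [h]⟩

lemma Solves.exists_isCyclicRun {M₀ : P → ℕ} (h : Solves N M₀ (circLTS w hw)) :
    ∃ M, M 0 = M₀ ∧ IsCyclicRun N w hw M := by
  obtain ⟨ζ, hinit, htr⟩ := h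
  let pos : ℕ → Fin w.length := fun q => ⟨q % w.length, Nat.mod_lt _ hw⟩
  have hsucc : ∀ q, (circLTS w hw).tr (pos q) (cycLetter w hw q) (pos (q + 1)) :=
    fun q => ⟨rfl, Nat.add_mod _ _ _ |>.trans (by simp [pos])⟩
  refine ⟨fun q => (ζ.symm (pos q)).1, ?_, ⟨fun q => ?_, fun q t hen => ?_, fun q => ?_,
    fun i j hi hj hij => ?_⟩⟩
  · have h0 : pos 0 = ζ (N.RG M₀).init := by rw [hinit]; exact Fin.ext (by simp [pos, circLTS])
    show (ζ.symm (pos 0)).1 = M₀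
    rw [h0, Equiv.symm_apply_apply]
    rfl
  · exact (htr (ζ.symm (pos q)) _ (ζ.symm (pos (q + 1)))).mpr (by simpa using hsucc q)
  · have hre : N.Reach M₀ (N.fire (ζ.symm (pos q)).1 t) :=
      (ζ.symm (pos q)).2.tail ⟨t, hen, rfl⟩
    have := ((htr (ζ.symm (pos q)) t ⟨_, hre⟩).mp ⟨hen, rfl⟩).1
    rwa [Equiv.apply_symm_apply] at this
  · simp [pos]
  · have := congrArg Fin.val (ζ.symm.injective (Subtype.ext hij))
    simpa [pos, Nat.mod_eq_of_lt hi, Nat.mod_eq_of_lt hj] using this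

end CyclicRun

section Separation

variable {L : Type} [DecidableEq L] (w : List L) (hw : 0 < w.length)

-- The state and event/state separation properties of region theory, for the regions `balance`.
def BalanceSSP : Prop :=
  ∀ i j, i < w.length → j < w.length →
    (∀ t t', balance w hw t t' i = balance w hw t t' j) → i = j

def BalanceESSP : Prop :=
  ∀ i j, cycLetter w hw j ≠ cycLetter w hw i →
    ∃ t, balance w hw t (cycLetter w hw i) j < balance w hw t (cycLetter w hw i) i

end Separation

namespace IsCyclicRun

variable {P L : Type} [Fintype L] [DecidableEq L] {N : PetriNet P L} {w : List L}
  {hw : 0 < w.length} {M : ℕ → P → ℕ}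

lemma marking_eq (hM : IsCyclicRun N w hw M) (q : ℕ) (p : P) :
    (M q p : ℤ) = M 0 p + ∑ t, N.incidence p t * cycCount w hw t q := by
  induction q with
  | zero => simp [cycCount]
  | succ q ih => rw [(hM.step q).marking_eq, ih, sum_mul_cycCount_succ]; ring

lemma sum_incidence_mul_count (hM : IsCyclicRun N w hw M) (p : P) :
    ∑ t, N.incidence p t * w.count t = 0 := by
  have h := hM.marking_eq w.length p
  rw [← hM.mod_length, Nat.mod_self] at h
  simpa [cycCount_length] using h

lemma count_mul_marking_sub (hM : IsCyclicRun N w hw M) (t₀ : L) (q : ℕ) (p : P) :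
    w.count t₀ * ((M q p : ℤ) - M 0 p) = ∑ t, N.incidence p t * balance w hw t t₀ q := by
  rw [hM.marking_eq, add_sub_cancel_left, count_mul_sum_cycCount (hM.sum_incidence_mul_count p)]

lemma balanceSSP (hM : IsCyclicRun N w hw M) : BalanceSSP w hw := by
  intro i j hi hj hb
  refine hM.injOn i j hi hj (funext fun p => ?_)
  have h := hM.count_mul_marking_sub (cycLetter w hw 0) i p
  simp only [hb, ← hM.count_mul_marking_sub (cycLetter w hw 0) j p] at h
  have := mul_left_cancel₀ (by exact_mod_cast (count_cycLetter_pos 0).ne') h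
  omega

lemma balanceESSP (hM : IsCyclicRun N w hw M) (hcf : N.choiceFree) : BalanceESSP w hw := by
  intro i j hij
  set a := cycLetter w hw i
  obtain ⟨p, hp⟩ : ∃ p, M j p < N.pre p a := by
    simpa [PetriNet.enabled] using mt (hM.eq_cycLetter_of_enabled j a) hij.symm
  have hpi : N.pre p a ≤ M i p := (hM.step i).1 p
  -- `p` has no output besides `a`, so its marking only grows with the balances towards `a`
  have hinc : ∀ q,
      w.count a * ((M q p : ℤ) - M 0 p) = ∑ t, N.post t p * balance w hw t a q := by
    intro q
    rw [hM.count_mul_marking_sub]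
    refine Finset.sum_congr rfl fun t _ => ?_
    by_cases hta : t = a
    · simp [hta, balance_self]
    · have : N.pre p t = 0 := by
        by_contra h
        exact hta (hcf p t a (Nat.pos_of_ne_zero h) (by omega))
      simp [PetriNet.incidence, this]
  have hsum :
      ∑ t, (N.post t p : ℤ) * balance w hw t a j < ∑ t, N.post t p * balance w hw t a i := by
    rw [← hinc, ← hinc]
    exact mul_lt_mul_of_pos_left (by omega) (by exact_mod_cast count_cycLetter_pos i)
  obtain ⟨t, -, ht⟩ := Finset.exists_lt_of_sum_lt hsum
  exact ⟨t, lt_of_mul_lt_mul_left ht (Nat.cast_nonneg _)⟩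

end IsCyclicRun

section PairNet

variable {L : Type} [DecidableEq L] (w : List L) (hw : 0 < w.length)

-- The place `(t, t')` realises `balance t t'`; the diagonal places are isolated.
def pairNet : PetriNet (L × L) L where
  pre p s := if p.1 ≠ p.2 ∧ s = p.2 then w.count p.1 else 0
  post s p := if p.1 ≠ p.2 ∧ s = p.1 then w.count p.2 else 0

def balanceMin (t t' : L) : ℤ :=
  (Finset.range w.length).inf' ⟨0, Finset.mem_range.mpr hw⟩ (balance w hw t t')

def pairMarking (q : ℕ) (p : L × L) : ℕ :=
  (balance w hw p.1 p.2 q - balanceMin w hw p.1 p.2).toNat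

variable {w hw}

lemma pairNet_wmg : (pairNet w).wmg := by
  refine ⟨fun p t t' h h' => ?_, fun p t t' h h' => ?_⟩ <;>
  · simp only [pairNet] at h h'
    split_ifs at h h' with h₁ h₂ <;> first | omega | exact h₁.2.trans h₂.2.symm

lemma balanceMin_le (t t' : L) (q : ℕ) : balanceMin w hw t t' ≤ balance w hw t t' q := by
  rw [← balance_mod_length]
  exact Finset.inf'_le _ (Finset.mem_range.mpr (Nat.mod_lt _ hw))

lemma exists_balanceMin_eq (t t' : L) : ∃ m, balanceMin w hw t t' = balance w hw t t' m := by
  obtain ⟨m, -, h⟩ :=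
    Finset.exists_mem_eq_inf' ⟨0, Finset.mem_range.mpr hw⟩ (balance w hw t t')
  exact ⟨m, h⟩

lemma pairNet_step (q : ℕ) :
    (pairNet w).step (pairMarking w hw q) (cycLetter w hw q) (pairMarking w hw (q + 1)) := by
  refine ⟨fun ⟨t, t'⟩ => ?_, funext fun ⟨t, t'⟩ => ?_⟩ <;>
  · have hs := balance_succ (w := w) (hw := hw) t t' q
    have := balanceMin_le (hw := hw) t t' q
    have := balanceMin_le (hw := hw) t t' (q + 1)
    simp only [pairNet, pairMarking, PetriNet.fire]
    by_cases htt : t = t'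
    · subst htt
      simp [balance_self]
    · simp only [ne_eq, htt, not_false_eq_true, true_and]
      split_ifs at hs ⊢ <;> first | omega | exact absurd (‹_ = t›.symm.trans ‹_ = t'›) htt

lemma isCyclicRun_pairNet (hssp : BalanceSSP w hw)
    (hsep : ∀ q m s, s ≠ cycLetter w hw q → balance w hw (cycLetter w hw q) s q
      < balance w hw (cycLetter w hw q) s m + w.count (cycLetter w hw q)) :
    IsCyclicRun (pairNet w) w hw (pairMarking w hw) where
  step := pairNet_step
  eq_cycLetter_of_enabled q s hen := by
    by_contra hs
    obtain ⟨m, hm⟩ := exists_balanceMin_eq (hw := hw) (cycLetter w hw q) s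
    have hpre : w.count (cycLetter w hw q) ≤ pairMarking w hw q (cycLetter w hw q, s) := by
      simpa [pairNet, Ne.symm hs] using hen (cycLetter w hw q, s)
    have := hsep q m s hs
    simp only [pairMarking, hm] at hpre
    have := count_cycLetter_pos (hw := hw) q
    omega
  mod_length q := funext fun p => by simp only [pairMarking, balance_mod_length]
  injOn i j hi hj h := hssp i j hi hj fun t t' => by
    have := congrFun h (t, t')
    have := balanceMin_le (hw := hw) t t' i
    have := balanceMin_le (hw := hw) t t' j
    simp only [pairMarking] at *
    omega

end PairNet

section ThreeLetters

variable {L : Type} [Fintype L] [DecidableEq L] {w : List L} {hw : 0 < w.length}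

lemma eq_of_card_eq_three (hcard : Fintype.card L = 3) {a b c d : L} (hab : a ≠ b)
    (hca : c ≠ a) (hcb : c ≠ b) (hda : d ≠ a) (hdb : d ≠ b) : c = d := by
  by_contra hcd
  have h4 : ({a, b, c, d} : Finset L).card = 4 := by
    rw [Finset.card_insert_of_notMem (by simp [hab, hca.symm, hda.symm]),
      Finset.card_insert_of_notMem (by simp [hcb.symm, hdb.symm]),
      Finset.card_insert_of_notMem (by simp [hcd]), Finset.card_singleton]
  have := Finset.card_le_univ ({a, b, c, d} : Finset L)
  omega

lemma balance_lt_of_card_eq_three (hcard : Fintype.card L = 3) (hE : BalanceESSP w hw)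
    {i j : ℕ} (hij : cycLetter w hw i ≠ cycLetter w hw j) :
    balance w hw (cycLetter w hw j) (cycLetter w hw i) j
      < balance w hw (cycLetter w hw j) (cycLetter w hw i) i := by
  obtain ⟨c, hc⟩ := hE j i hij
  obtain ⟨d, hd⟩ := hE i j hij.symm
  set a := cycLetter w hw j
  set b := cycLetter w hw i
  by_contra! h
  have hca : c ≠ a := by rintro rfl; simp [balance_self] at hc
  have hcb : c ≠ b := by rintro rfl; rw [balance_swap a b, balance_swap a b] at hc; omega
  have hda : d ≠ a := by rintro rfl; omega
  have hdb : d ≠ b := by rintro rfl; simp [balance_self] at hd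
  obtain rfl := eq_of_card_eq_three hcard hij.symm hca hcb hda hdb
  -- the third letter `c` separates both ways, which the cocycle identity forbids
  have hi := balance_cocycle (hw := hw) a b c i
  have hj := balance_cocycle (hw := hw) a b c j
  rw [balance_swap c b] at hi hj
  have ha : (0 : ℤ) < w.count a := by exact_mod_cast count_cycLetter_pos j
  have hb : (0 : ℤ) < w.count b := by exact_mod_cast count_cycLetter_pos i
  nlinarith [mul_nonneg (Nat.cast_nonneg (α := ℤ) (w.count c)) (sub_nonneg.mpr h),
    mul_pos ha (sub_pos.mpr hd), mul_pos hb (sub_pos.mpr hc)]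

lemma balance_lt_add_count_of_card_eq_three (hcard : Fintype.card L = 3)
    (hE : BalanceESSP w hw) (q m : ℕ) (s : L) (hs : s ≠ cycLetter w hw q) :
    balance w hw (cycLetter w hw q) s q
      < balance w hw (cycLetter w hw q) s m + w.count (cycLetter w hw q) := by
  have hpos := count_cycLetter_pos (hw := hw) q
  rcases Nat.eq_zero_or_pos (w.count s) with hs0 | hs0
  · simp only [balance_of_count_eq_zero _ hs0]
    omega
  · obtain ⟨i, hi, hle⟩ := exists_cycLetter_eq_balance_le hs hs0 m
    have := balance_lt_of_card_eq_three hcard hE (i := i) (j := q) (hi ▸ hs)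
    rw [hi] at this
    omega

end ThreeLetters

/-- over a three-letter alphabet, cyclic WMG-solvability = cyclic CF-solvability. -/
theorem stmt9 {L : Type} [Fintype L] [DecidableEq L] (hcard : Fintype.card L = 3)
    (u : List L) : cyclicWMGSolvable u ↔ cyclicCFSolvable u := by
  refine ⟨fun ⟨hu, k, N, M₀, hN, hs⟩ => ⟨hu, k, N, M₀, hN.1, hs⟩, ?_⟩
  rintro ⟨hu, k, N, M₀, hcf, hs⟩
  obtain ⟨M, -, hM⟩ := hs.exists_isCyclicRun
  have hrun : IsCyclicRun (pairNet u) u hu (pairMarking u hu) :=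
    isCyclicRun_pairNet hM.balanceSSP
      (balance_lt_add_count_of_card_eq_three hcard (hM.balanceESSP hcf))
  let e := (Fintype.equivFin (L × L)).symm
  exact ⟨hu, _, restrictNet (pairNet u) e, _, wmg_restrictNet pairNet_wmg e,
    solves_circLTS_of_isCyclicRun (hrun.restrictNet e.surjective)⟩
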